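/- arXiv:1409.6045 — 3 statements merged into one kernel-verified Lean document; each statement's English description precedes it below -/
import Mathlib

section
/- Let H be a real inner product space, m ∈ ℕ, and v : Fin m → H a family of vectors with 0 < r ≤ ‖v i‖ for all i. If the dictionary has Babel measure at most γ, i.e., for every index i we have ∑_{j ≠ i} |⟪v i, v j⟫| ≤ γ (with γ ≥ 0), and if γ < r², then the family (v i) is linearly independent. -/
open scoped RealInnerProductSpace BigOperators

/-! A Babel bound below `r²` makes the Gram matrix strictly diagonally dominant, so its
determinant is nonzero by the Levy–Desplanques theorem, and a family with invertible Gram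
matrix is linearly independent. -/

open Finset Matrix

theorem linearIndependent_of_sum_norm_inner_lt {𝕜 E ι : Type*} [RCLike 𝕜]
    [SeminormedAddCommGroup E] [InnerProductSpace 𝕜 E] [Fintype ι] [DecidableEq ι]
    {v : ι → E} (h : ∀ i, ∑ j ∈ univ.erase i, ‖inner 𝕜 (v i) (v j)‖ < ‖v i‖ ^ 2) :
    LinearIndependent 𝕜 v :=
  linearIndependent_of_det_gram_ne_zero <| det_ne_zero_of_sum_row_lt_diag fun i => by
    simpa only [gram_apply, inner_self_eq_norm_sq_to_K, norm_pow, RCLike.norm_ofReal,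
      abs_norm] using h i

theorem linearIndependent_of_babel_general
    {H : Type*} [NormedAddCommGroup H] [InnerProductSpace ℝ H]
    {m : ℕ} (v : Fin m → H) (r γ : ℝ)
    (hr : 0 < r)
    (hlow : ∀ i, r ≤ ‖v i‖)
    (hbabel : ∀ i, ∑ j ∈ Finset.univ.erase i, |⟪v i, v j⟫| ≤ γ)
    (hcond : γ < r ^ 2) :
    LinearIndependent ℝ v :=
  linearIndependent_of_sum_norm_inner_lt fun i =>
    calc ∑ j ∈ univ.erase i, ‖⟪v i, v j⟫‖ = ∑ j ∈ univ.erase i, |⟪v i, v j⟫| := rfl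
      _ ≤ γ := hbabel i
      _ < r ^ 2 := hcond
      _ ≤ ‖v i‖ ^ 2 := pow_le_pow_left₀ hr.le (hlow i) 2

/-- Linear independence of a γ-Babel dictionary. -/
theorem linearIndependent_of_babel
    {H : Type*} [NormedAddCommGroup H] [InnerProductSpace ℝ H]
    {m : ℕ} (v : Fin m → H) (r γ : ℝ)
    (hr : 0 < r) (hγ : 0 ≤ γ)
    (hlow : ∀ i, r ≤ ‖v i‖)
    (hbabel : ∀ i, ∑ j ∈ Finset.univ.erase i, |⟪v i, v j⟫| ≤ γ)
    (hcond : γ < r ^ 2) :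
    LinearIndependent ℝ v :=
  linearIndependent_of_babel_general v r γ hr hlow hbabel hcond
end

section
/- Let H be a real inner product space, m ∈ ℕ, v : Fin m → H a family of vectors with 0 < r ≤ ‖v i‖ ≤ R for all i, and K the Gram matrix with entries K i j = ⟪v i, v j⟫. Suppose the dictionary has Babel measure at most γ, i.e., for every index i, ∑_{j ≠ i} |⟪v i, v j⟫| ≤ γ (with γ ≥ 0), and suppose γ < r². Then for any two eigenvalues λ and μ of the symmetric matrix K, one has λ ≤ ((R² + γ) / (r² − γ)) · μ; in particular the ℓ₂ condition number λ_max/λ_min of K is at most (R² + γ) / (r² − γ). -/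
/-!
The diagonal entries of the Gram matrix are the squared norms `‖v i‖² ∈ [r², R²]` and the Babel
condition bounds its off-diagonal absolute row sums by `γ`, so by Gershgorin's theorem every
eigenvalue lies in `[r² - γ, R² + γ]`. Any two numbers of an interval `[a, b]` with `0 < a` have
ratio at most `b / a`.
-/

open scoped RealInnerProductSpace

open Finset Set Module.End

namespace Matrix

variable {n : Type*} [Fintype n] [DecidableEq n]

theorem hasEigenvalue_toLin'_of_mulVec_eq_smul {R : Type*} [CommRing R] {A : Matrix n n R}
    {μ : R} {x : n → R} (hx : x ≠ 0) (h : A *ᵥ x = μ • x) : HasEigenvalue (toLin' A) μ :=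
  hasEigenvalue_of_hasEigenvector ⟨mem_eigenspace_iff.mpr (by rwa [toLin'_apply]), hx⟩

theorem eigenvalue_mem_Icc_of_diag_mem_Icc {A : Matrix n n ℝ} {a b γ μ : ℝ}
    (hdiag : ∀ i, A i i ∈ Icc a b) (hrow : ∀ i, ∑ j ∈ univ.erase i, |A i j| ≤ γ)
    (hμ : HasEigenvalue (toLin' A) μ) : μ ∈ Icc (a - γ) (b + γ) := by
  obtain ⟨k, hk⟩ := eigenvalue_mem_ball hμ
  rw [Metric.mem_closedBall, Real.dist_eq] at hk
  simp only [Real.norm_eq_abs] at hk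
  obtain ⟨hlo, hhi⟩ := abs_le.mp (hk.trans (hrow k))
  exact ⟨by linarith [(hdiag k).1], by linarith [(hdiag k).2]⟩

theorem gram_eigenvalue_mem_Icc {H : Type*} [NormedAddCommGroup H] [InnerProductSpace ℝ H]
    {v : n → H} {r R γ μ : ℝ} (hr : 0 ≤ r) (hlow : ∀ i, r ≤ ‖v i‖) (hup : ∀ i, ‖v i‖ ≤ R)
    (hbabel : ∀ i, ∑ j ∈ univ.erase i, |⟪v i, v j⟫| ≤ γ)
    (hμ : HasEigenvalue (toLin' (gram ℝ v)) μ) : μ ∈ Icc (r ^ 2 - γ) (R ^ 2 + γ) := by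
  refine eigenvalue_mem_Icc_of_diag_mem_Icc (fun i => ?_) hbabel hμ
  rw [real_inner_self_eq_norm_sq]
  exact ⟨pow_le_pow_left₀ hr (hlow i) 2, pow_le_pow_left₀ (norm_nonneg _) (hup i) 2⟩

end Matrix

theorem le_div_mul_of_mem_Icc {a b x y : ℝ} (ha : 0 < a) (hx : x ∈ Icc a b) (hy : y ∈ Icc a b) :
    x ≤ b / a * y := by
  have hb : 0 ≤ b := ha.le.trans (hx.1.trans hx.2)
  calc x ≤ b := hx.2
    _ = b / a * a := (div_mul_cancel₀ b ha.ne').symm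
    _ ≤ b / a * y := by gcongr; exact hy.1

theorem gram_condition_number_babel_general
    {H : Type*} [NormedAddCommGroup H] [InnerProductSpace ℝ H]
    {m : ℕ} (v : Fin m → H) (r R γ : ℝ)
    (hr : 0 < r)
    (hlow : ∀ i, r ≤ ‖v i‖) (hup : ∀ i, ‖v i‖ ≤ R)
    (hbabel : ∀ i, ∑ j ∈ Finset.univ.erase i, |⟪v i, v j⟫| ≤ γ)
    (hcond : γ < r ^ 2)
    (K : Matrix (Fin m) (Fin m) ℝ) (hK : ∀ i j, K i j = ⟪v i, v j⟫)
    (lam mu : ℝ)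
    (hlam : ∃ x : Fin m → ℝ, x ≠ 0 ∧ K.mulVec x = lam • x)
    (hmu : ∃ x : Fin m → ℝ, x ≠ 0 ∧ K.mulVec x = mu • x) :
    lam ≤ (R ^ 2 + γ) / (r ^ 2 - γ) * mu := by
  obtain rfl : K = Matrix.gram ℝ v := Matrix.ext hK
  have hspec : ∀ l, (∃ x : Fin m → ℝ, x ≠ 0 ∧ (Matrix.gram ℝ v).mulVec x = l • x) →
      l ∈ Icc (r ^ 2 - γ) (R ^ 2 + γ) := fun _ ⟨_, hx, h⟩ =>
    Matrix.gram_eigenvalue_mem_Icc hr.le hlow hup hbabel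
      (Matrix.hasEigenvalue_toLin'_of_mulVec_eq_smul hx h)
  exact le_div_mul_of_mem_Icc (sub_pos.2 hcond) (hspec lam hlam) (hspec mu hmu)

/-- Condition-number bound for the Gram matrix of a γ-Babel dictionary:
any two eigenvalues λ, μ satisfy λ ≤ ((R² + γ) / (r² − γ)) · μ. -/
theorem gram_condition_number_babel
    {H : Type*} [NormedAddCommGroup H] [InnerProductSpace ℝ H]
    {m : ℕ} (v : Fin m → H) (r R γ : ℝ)
    (hr : 0 < r) (hγ : 0 ≤ γ)
    (hlow : ∀ i, r ≤ ‖v i‖) (hup : ∀ i, ‖v i‖ ≤ R)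
    (hbabel : ∀ i, ∑ j ∈ Finset.univ.erase i, |⟪v i, v j⟫| ≤ γ)
    (hcond : γ < r ^ 2)
    (K : Matrix (Fin m) (Fin m) ℝ) (hK : ∀ i j, K i j = ⟪v i, v j⟫)
    (lam mu : ℝ)
    (hlam : ∃ x : Fin m → ℝ, x ≠ 0 ∧ K.mulVec x = lam • x)
    (hmu : ∃ x : Fin m → ℝ, x ≠ 0 ∧ K.mulVec x = mu • x) :
    lam ≤ (R ^ 2 + γ) / (r ^ 2 - γ) * mu :=
  gram_condition_number_babel_general v r R γ hr hlow hup hbabel hcond K hK lam mu hlam hmu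
end

section
/- Let H be a real inner product space, m ∈ ℕ, and v : Fin m → H a family of vectors with 0 < r ≤ ‖v i‖ ≤ R for all i. Suppose the dictionary has Babel measure at most γ, i.e., for every index i, ∑_{j ≠ i} |⟪v i, v j⟫| ≤ γ (with γ ≥ 0). Then for every coefficient vector α : Fin m → ℝ, (r² − γ) · ‖α‖² ≤ ‖∑_j α j • v j‖² ≤ (R² + γ) · ‖α‖², where ‖α‖² = ∑_j (α j)². (Quasi-isometry between the dual space ℝ^m and the span of the dictionary, for the Babel measure.) -/
/-!
Expanding the square, `‖∑ αⱼ vⱼ‖² = ∑ αᵢ² ‖vᵢ‖² + ∑_{i ≠ j} αᵢ αⱼ ⟪vᵢ, vⱼ⟫`. The diagonal part lies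
between `r² ‖α‖²` and `R² ‖α‖²`. For the off-diagonal part, `|αᵢ αⱼ| ≤ (αᵢ² + αⱼ²) / 2` and the
symmetry of the Gram matrix reduce it to `∑ᵢ αᵢ² ∑_{j ≠ i} |⟪vᵢ, vⱼ⟫|`, which the Babel bound
controls by `γ ‖α‖²` (a Schur test).
-/

open scoped RealInnerProductSpace

open Finset

section OffDiagonal

variable {ι : Type*} [Fintype ι] [DecidableEq ι]

theorem sum_sum_erase_comm {M : Type*} [AddCommMonoid M] (f : ι → ι → M) :
    ∑ i, ∑ j ∈ univ.erase i, f i j = ∑ i, ∑ j ∈ univ.erase i, f j i :=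
  sum_comm' fun i j => by simp [eq_comm, and_comm]

theorem sum_sum_erase_sq_mul_le (a : ι → ι → ℝ) (x : ι → ℝ) {γ : ℝ}
    (hrow : ∀ i, ∑ j ∈ univ.erase i, a i j ≤ γ) :
    ∑ i, ∑ j ∈ univ.erase i, x i ^ 2 * a i j ≤ γ * ∑ i, x i ^ 2 :=
  calc ∑ i, ∑ j ∈ univ.erase i, x i ^ 2 * a i j
      = ∑ i, x i ^ 2 * ∑ j ∈ univ.erase i, a i j := by simp only [mul_sum]
    _ ≤ ∑ i, x i ^ 2 * γ := sum_le_sum fun i _ => mul_le_mul_of_nonneg_left (hrow i) (sq_nonneg _)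
    _ = γ * ∑ i, x i ^ 2 := by rw [← sum_mul, mul_comm]

theorem abs_sum_sum_erase_mul_le (a : ι → ι → ℝ) (ha : ∀ i j, a i j = a j i) (x : ι → ℝ)
    {γ : ℝ} (hrow : ∀ i, ∑ j ∈ univ.erase i, |a i j| ≤ γ) :
    |∑ i, ∑ j ∈ univ.erase i, x i * x j * a i j| ≤ γ * ∑ i, x i ^ 2 := by
  have hterm (i j : ι) : |x i * x j * a i j| ≤ x i ^ 2 / 2 * |a i j| + x j ^ 2 / 2 * |a i j| := by
    rw [abs_mul, abs_mul, ← add_mul]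
    refine mul_le_mul_of_nonneg_right ?_ (abs_nonneg _)
    nlinarith [sq_nonneg (|x i| - |x j|), sq_abs (x i), sq_abs (x j)]
  have hrow' : ∑ i, ∑ j ∈ univ.erase i, x i ^ 2 * |a i j| ≤ γ * ∑ i, x i ^ 2 :=
    sum_sum_erase_sq_mul_le _ x hrow
  have hcol : ∑ i, ∑ j ∈ univ.erase i, x j ^ 2 * |a i j|
      = ∑ i, ∑ j ∈ univ.erase i, x i ^ 2 * |a i j| := by
    rw [sum_sum_erase_comm]
    simp only [ha]
  calc |∑ i, ∑ j ∈ univ.erase i, x i * x j * a i j|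
      ≤ ∑ i, ∑ j ∈ univ.erase i, |x i * x j * a i j| :=
        (abs_sum_le_sum_abs _ _).trans (sum_le_sum fun i _ => abs_sum_le_sum_abs _ _)
    _ ≤ ∑ i, ∑ j ∈ univ.erase i, (x i ^ 2 / 2 * |a i j| + x j ^ 2 / 2 * |a i j|) :=
        sum_le_sum fun i _ => sum_le_sum fun j _ => hterm i j
    _ = (∑ i, ∑ j ∈ univ.erase i, x i ^ 2 * |a i j|
          + ∑ i, ∑ j ∈ univ.erase i, x j ^ 2 * |a i j|) / 2 := by
        simp only [← sum_add_distrib, sum_div]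
        exact sum_congr rfl fun i _ => sum_congr rfl fun j _ => by ring
    _ ≤ γ * ∑ i, x i ^ 2 := by linarith

end OffDiagonal

section GramExpansion

variable {ι : Type*} [Fintype ι] [DecidableEq ι] {H : Type*} [NormedAddCommGroup H]
  [InnerProductSpace ℝ H]

theorem norm_sum_smul_sq_eq (v : ι → H) (α : ι → ℝ) :
    ‖∑ j, α j • v j‖ ^ 2 =
      ∑ i, α i ^ 2 * ‖v i‖ ^ 2 + ∑ i, ∑ j ∈ univ.erase i, α i * α j * ⟪v i, v j⟫ := by
  rw [← real_inner_self_eq_norm_sq, sum_inner, ← sum_add_distrib]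
  refine sum_congr rfl fun i _ => ?_
  rw [real_inner_smul_left, inner_sum, mul_sum, ← add_sum_erase _ _ (mem_univ i),
    real_inner_smul_right, real_inner_self_eq_norm_sq]
  congr 1
  · ring
  · exact sum_congr rfl fun j _ => by rw [real_inner_smul_right]; ring

theorem abs_sum_sum_erase_inner_le (v : ι → H) (α : ι → ℝ) {γ : ℝ}
    (hbabel : ∀ i, ∑ j ∈ univ.erase i, |⟪v i, v j⟫| ≤ γ) :
    |∑ i, ∑ j ∈ univ.erase i, α i * α j * ⟪v i, v j⟫| ≤ γ * ∑ i, α i ^ 2 :=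
  abs_sum_sum_erase_mul_le (fun i j => ⟪v i, v j⟫) (fun _ _ => real_inner_comm _ _) α hbabel

end GramExpansion

theorem sum_sq_mul_le_sum_sq_mul {ι : Type*} (s : Finset ι) (α c d : ι → ℝ)
    (h : ∀ i ∈ s, c i ≤ d i) : ∑ i ∈ s, α i ^ 2 * c i ≤ ∑ i ∈ s, α i ^ 2 * d i :=
  sum_le_sum fun i hi => mul_le_mul_of_nonneg_left (h i hi) (sq_nonneg _)

theorem quasi_isometry_babel_general
    {H : Type*} [NormedAddCommGroup H] [InnerProductSpace ℝ H]
    {m : ℕ} (v : Fin m → H) (r R γ : ℝ)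
    (hr : 0 < r)
    (hlow : ∀ i, r ≤ ‖v i‖) (hup : ∀ i, ‖v i‖ ≤ R)
    (hbabel : ∀ i, ∑ j ∈ Finset.univ.erase i, |⟪v i, v j⟫| ≤ γ)
    (α : Fin m → ℝ) :
    (r ^ 2 - γ) * ∑ j, (α j) ^ 2 ≤ ‖∑ j, α j • v j‖ ^ 2 ∧
    ‖∑ j, α j • v j‖ ^ 2 ≤ (R ^ 2 + γ) * ∑ j, (α j) ^ 2 := by
  have hdiag_low : r ^ 2 * ∑ i, α i ^ 2 ≤ ∑ i, α i ^ 2 * ‖v i‖ ^ 2 := by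
    simpa only [mul_comm (r ^ 2), sum_mul] using
      sum_sq_mul_le_sum_sq_mul univ α _ _ fun i _ => pow_le_pow_left₀ hr.le (hlow i) 2
  have hdiag_up : ∑ i, α i ^ 2 * ‖v i‖ ^ 2 ≤ R ^ 2 * ∑ i, α i ^ 2 := by
    simpa only [mul_comm (R ^ 2), sum_mul] using
      sum_sq_mul_le_sum_sq_mul univ α _ _ fun i _ => pow_le_pow_left₀ (norm_nonneg _) (hup i) 2
  have hoff := abs_le.mp (abs_sum_sum_erase_inner_le v α hbabel)
  rw [norm_sum_smul_sq_eq]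
  constructor <;> linarith [hoff.1, hoff.2]

/-- Quasi-isometry between the dual space ℝ^m and the span of a γ-Babel
dictionary. -/
theorem quasi_isometry_babel
    {H : Type*} [NormedAddCommGroup H] [InnerProductSpace ℝ H]
    {m : ℕ} (v : Fin m → H) (r R γ : ℝ)
    (hr : 0 < r) (hγ : 0 ≤ γ)
    (hlow : ∀ i, r ≤ ‖v i‖) (hup : ∀ i, ‖v i‖ ≤ R)
    (hbabel : ∀ i, ∑ j ∈ Finset.univ.erase i, |⟪v i, v j⟫| ≤ γ)
    (α : Fin m → ℝ) :
    (r ^ 2 - γ) * ∑ j, (α j) ^ 2 ≤ ‖∑ j, α j • v j‖ ^ 2 ∧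
    ‖∑ j, α j • v j‖ ^ 2 ≤ (R ^ 2 + γ) * ∑ j, (α j) ^ 2 :=
  quasi_isometry_babel_general v r R γ hr hlow hup hbabel α
end
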